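/- arXiv:2404.10514 — 7 statements merged into one kernel-verified Lean document; each statement's English description precedes it below -/
import Mathlib

section
/- Let N be a project network and let k be a positive integer with k ≤ k_max. Then every k-crashing plan of N has cost at least k times the minimum cost of a 1-crashing plan of N. -/
noncomputable section
open scoped Classical
open Finset

/-- A project network: a finite DAG (witnessed by a rank function) with a single
source `s` and a single sink `t`; each edge `e` carries a minimum length `a e`,
a normal length `b e`, and a nonnegative cost slope `c e`. -/
structure Project where
  V : Type
  E : Type
  [instFV : Fintype V]
  [instDV : DecidableEq V]
  [instFE : Fintype E]
  [instDE : DecidableEq E]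
  src : E → V
  dst : E → V
  s : V
  t : V
  a : E → ℤ
  b : E → ℤ
  c : E → ℝ
  length_lb : ∀ e, a e ≤ b e
  cost_nonneg : ∀ e, 0 ≤ c e
  rank : V → ℕ
  acyclic : ∀ e, rank (src e) < rank (dst e)
  s_no_in : ∀ e, dst e ≠ s
  t_no_out : ∀ e, src e ≠ t
  source_unique : ∀ v, v ≠ s → ∃ e, dst e = v
  sink_unique : ∀ v, v ≠ t → ∃ e, src e = v

attribute [instance] Project.instFV Project.instDV Project.instFE Project.instDE

namespace Project

/-- A network state: a subset of the edges together with current edge lengths. -/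
structure State (P : Project) where
  edges : Finset P.E
  len : P.E → ℤ

variable (P : Project)

/-- `es` is a directed path from the source `s` to the sink `t` using edges of `H`. -/
def IsPath (H : State P) (es : List P.E) : Prop :=
  es ≠ [] ∧ (∀ e ∈ es, e ∈ H.edges) ∧
  List.Chain' (fun e f => P.dst e = P.src f) es ∧
  (∀ e ∈ es.head?, P.src e = P.s) ∧ (∀ e ∈ es.getLast?, P.dst e = P.t)

/-- The length of a path in state `H`. -/
def pathLen (H : State P) (es : List P.E) : ℤ := (es.map H.len).sum

/-- The duration of `H`: the maximum total length of a directed `s`-`t` path. -/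
def duration (H : State P) : ℤ :=
  sSup {L : ℤ | ∃ es, IsPath P H es ∧ pathLen P H es = L}

/-- The critical graph `H*`: the edges of `H` lying on some maximum-length path. -/
def critical (H : State P) : State P :=
  ⟨H.edges.filter (fun e => ∃ es, IsPath P H es ∧ pathLen P H es = duration P H ∧ e ∈ es),
   H.len⟩

/-- An accelerate plan is feasible if each edge is shortened by at most `b e - a e`. -/
def Feasible (X : P.E → ℕ) : Prop := ∀ e, (X e : ℤ) ≤ P.b e - P.a e

/-- The original network `N` (all edges, with their normal lengths). -/
def base : State P := ⟨Finset.univ, P.b⟩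

/-- The accelerated network `N(X)`, whose edge lengths are `b e - X e`. -/
def applyPlan (X : P.E → ℕ) : State P := ⟨Finset.univ, fun e => P.b e - X e⟩

/-- The cost of a plan: `∑ e, c e * x e`. -/
def cost (X : P.E → ℕ) : ℝ := ∑ e, P.c e * (X e : ℝ)

/-- The cost of a set of edges: the sum of their cost slopes. -/
def costSet (C : Finset P.E) : ℝ := ∑ e ∈ C, P.c e

/-- `X` is a `k`-crashing plan of `N`: it is feasible and shortens the duration by `k`. -/
def Crashing (k : ℤ) (X : P.E → ℕ) : Prop :=
  Feasible P X ∧ duration P (applyPlan P X) ≤ duration P (base P) - k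

/-- The plan shortening every edge maximally. -/
def fullPlan : P.E → ℕ := fun e => (P.b e - P.a e).toNat

/-- `k_max = d(N) - d(N(X_full))`. -/
def kmax : ℤ := duration P (base P) - duration P (applyPlan P (fullPlan P))

/-- `C` is the cut of `H` determined by the vertex partition `(S, Sᶜ)` with `s ∈ S`, `t ∉ S`. -/
def IsCutWith (H : State P) (S : Finset P.V) (C : Finset P.E) : Prop :=
  P.s ∈ S ∧ P.t ∉ S ∧ C = H.edges.filter (fun e => P.src e ∈ S ∧ P.dst e ∉ S)

/-- `C` is a cut of `H`. -/
def IsCut (H : State P) (C : Finset P.E) : Prop := ∃ S, IsCutWith P H S C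

/-- The plan `X` contains a cut of `H` (some cut lies inside the support of `X`). -/
def PlanContainsCut (H : State P) (X : P.E → ℕ) : Prop :=
  ∃ C, IsCut P H C ∧ ∀ e ∈ C, 1 ≤ X e

/-- The edge set `D` contains a cut of `H`. -/
def ContainsCut (H : State P) (D : Finset P.E) : Prop :=
  ∃ C, IsCut P H C ∧ C ⊆ D

/-- `C = mincut(H, X)`: a minimum-cost cut of `H` among all cuts contained in `X`. -/
def IsMinCutIn (H : State P) (X : P.E → ℕ) (C : Finset P.E) : Prop :=
  IsCut P H C ∧ (∀ e ∈ C, 1 ≤ X e) ∧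
  ∀ C', IsCut P H C' → (∀ e ∈ C', 1 ≤ X e) → costSet P C ≤ costSet P C'

/-- `H(C)`: the state `H` with every edge of `C` shortened by `1`. -/
def shorten (H : State P) (C : Finset P.E) : State P :=
  ⟨H.edges, fun e => H.len e - if e ∈ C then 1 else 0⟩

/-- The decomposition `N_i, X_i, C_i` associated to a `k`-crashing plan `X`:
`N_1 = N`, `X_1 = X`, `C_i = mincut(N_i*, X_i)`, and for `1 < i ≤ k`,
`N_i = N_{i-1}*(C_{i-1})` and `X_i = X_{i-1} ∖ C_{i-1}`. -/
def Decomp (X : P.E → ℕ) (k : ℕ) (Ns : ℕ → State P) (Xs : ℕ → P.E → ℕ)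
    (Cs : ℕ → Finset P.E) : Prop :=
  Ns 1 = base P ∧ Xs 1 = X ∧
  (∀ i, 1 ≤ i → i ≤ k → IsMinCutIn P (critical P (Ns i)) (Xs i) (Cs i)) ∧
  ∀ i, 1 < i → i ≤ k →
    Ns i = shorten P (critical P (Ns (i - 1))) (Cs (i - 1)) ∧
    Xs i = fun e => Xs (i - 1) e - if e ∈ Cs (i - 1) then 1 else 0

/-- The edges of `H` within the vertex set `S`. -/
def withinEdges (H : State P) (S : Finset P.V) : Finset P.E :=
  H.edges.filter (fun e => P.src e ∈ S ∧ P.dst e ∈ S)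

/-- The edges of `H` within the complement of the vertex set `S`. -/
def outsideEdges (H : State P) (S : Finset P.V) : Finset P.E :=
  H.edges.filter (fun e => P.src e ∉ S ∧ P.dst e ∉ S)

/-- The edges of `H` going from the complement of `S` back into `S`. -/
def reverseCut (H : State P) (S : Finset P.V) : Finset P.E :=
  H.edges.filter (fun e => P.src e ∉ S ∧ P.dst e ∈ S)

/-- `Z` is an `m`-crashing plan of the accelerated network `N(Y)`. -/
def CrashesBy (Y Z : P.E → ℕ) (m : ℤ) : Prop :=
  Feasible P (fun e => Y e + Z e) ∧
  duration P (applyPlan P (fun e => Y e + Z e)) ≤ duration P (applyPlan P Y) - m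

/-- `Z` is a minimum-cost `1`-crashing plan of the accelerated network `N(Y)`. -/
def MinOneCrashOf (Y Z : P.E → ℕ) : Prop :=
  CrashesBy P Y Z 1 ∧ ∀ Z', CrashesBy P Y Z' 1 → cost P Z ≤ cost P Z'

end Project

/-!
Let `m(u)` be the least `X`-load of a prefix, ending at `u`, of a critical path of `N`. Since `X`
shortens every critical path by at least `k`, `m` runs from `0` at `s` to at least `k` at `t`; and
since exchanging prefixes of critical paths at a common vertex keeps them critical, `m` grows by
at most `X e` across an edge `e` of a critical path. Hence for each level `1 ≤ j ≤ k` the edges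
`e` with `m(src e) < j ≤ m(src e) + X e` meet every critical path, so shortening them by one is a
`1`-crashing plan `Y_j`. An edge lies in at most `X e` of these plans, so
`cost X ≥ ∑ j, cost Y_j ≥ k · cost A`.
-/

namespace Project

variable {P : Project}

variable (P) in
def IsWalk : P.V → List P.E → P.V → Prop
  | u, [], v => u = v
  | u, e :: es, v => P.src e = u ∧ IsWalk (P.dst e) es v

theorem IsWalk.append {u v w : P.V} {q r : List P.E} (hq : IsWalk P u q v)
    (hr : IsWalk P v r w) : IsWalk P u (q ++ r) w := by
  induction q generalizing u with
  | nil => exact hq ▸ hr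
  | cons e q ih => exact ⟨hq.1, ih hq.2⟩

theorem IsWalk.concat {u v : P.V} {q : List P.E} {e : P.E} (hq : IsWalk P u q v)
    (he : P.src e = v) : IsWalk P u (q ++ [e]) (P.dst e) :=
  hq.append ⟨he, rfl⟩

theorem IsWalk.of_append {u v w : P.V} {q r : List P.E} (h : IsWalk P u (q ++ r) w)
    (hq : IsWalk P u q v) : IsWalk P v r w := by
  induction q generalizing u with
  | nil => exact hq ▸ h
  | cons e q ih => exact ih h.2 hq.2

theorem IsWalk.eq_nil_of_ends_at_source {u : P.V} {es : List P.E} (h : IsWalk P u es P.s) :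
    es = [] := by
  induction es generalizing u with
  | nil => rfl
  | cons e es ih =>
    obtain rfl := ih h.2
    exact absurd h.2 (P.s_no_in e)

theorem IsWalk.eq_nil_of_starts_at_sink {v : P.V} {es : List P.E} (h : IsWalk P P.t es v) :
    es = [] := by
  cases es with
  | nil => rfl
  | cons e es => exact absurd h.1 (P.t_no_out e)

theorem isWalk_dst_iff_isChain (e : P.E) (l : List P.E) (v : P.V) :
    IsWalk P (P.dst e) l v ↔ List.IsChain (fun e f => P.dst e = P.src f) (e :: l) ∧
      P.dst ((e :: l).getLast (List.cons_ne_nil _ _)) = v := by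
  induction l generalizing e with
  | nil => simp [IsWalk]
  | cons f l ih => simp [IsWalk, ih, eq_comm, and_assoc]

theorem isPath_base_iff {es : List P.E} :
    IsPath P (base P) es ↔ es ≠ [] ∧ IsWalk P P.s es P.t := by
  cases es with
  | nil => simp [IsPath]
  | cons e l =>
    simp [IsPath, IsWalk, isWalk_dst_iff_isChain, base,
      List.getLast?_eq_some_getLast (List.cons_ne_nil e l)]
    exact and_left_comm

theorem isPath_applyPlan_iff {X : P.E → ℕ} {es : List P.E} :
    IsPath P (applyPlan P X) es ↔ IsPath P (base P) es := Iff.rfl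

theorem IsPath.exchange_prefix {q r q' : List P.E} {u : P.V} (h : IsPath P (base P) (q ++ r))
    (hq : IsWalk P P.s q u) (hq' : IsWalk P P.s q' u) : IsPath P (base P) (q' ++ r) := by
  rw [isPath_base_iff] at h ⊢
  have hr := h.2.of_append hq
  refine ⟨fun hnil => h.1 ?_, hq'.append hr⟩
  obtain ⟨rfl, rfl⟩ := List.append_eq_nil_iff.mp hnil
  have hst : P.s = P.t := hq'.trans hr
  have hw := h.2
  rw [← hst] at hw
  exact hw.eq_nil_of_ends_at_source

theorem pathLen_append (H : State P) (q r : List P.E) :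
    pathLen P H (q ++ r) = pathLen P H q + pathLen P H r := by
  simp [pathLen]

theorem pathLen_applyPlan (X : P.E → ℕ) (es : List P.E) :
    pathLen P (applyPlan P X) es = pathLen P (base P) es - (es.map X).sum := by
  induction es with
  | nil => simp [pathLen]
  | cons e es ih =>
    simp only [pathLen, applyPlan, base, List.map_cons, List.sum_cons] at ih ⊢
    push_cast at ih ⊢
    linarith

theorem IsPath.nodup {H : State P} {es : List P.E} (h : IsPath P H es) : es.Nodup := by
  have hrank : List.IsChain (· < ·) (es.map fun e => P.rank (P.src e)) :=
    List.isChain_map _ |>.mpr <|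
      List.IsChain.imp (fun e f (hef : P.dst e = P.src f) => hef ▸ P.acyclic e) h.2.2.1
  exact List.Nodup.of_map _ ((List.isChain_iff_pairwise.mp hrank).imp ne_of_lt)

theorem bddAbove_pathLen (H : State P) :
    BddAbove {L : ℤ | ∃ es, IsPath P H es ∧ pathLen P H es = L} := by
  refine ⟨∑ e, max (H.len e) 0, ?_⟩
  rintro L ⟨es, hes, rfl⟩
  calc pathLen P H es = ∑ e ∈ es.toFinset, H.len e := (List.sum_toFinset _ hes.nodup).symm
    _ ≤ ∑ e ∈ es.toFinset, max (H.len e) 0 := sum_le_sum fun e _ => le_max_left _ _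
    _ ≤ ∑ e, max (H.len e) 0 :=
      sum_le_sum_of_subset_of_nonneg (subset_univ _) fun e _ _ => le_max_right _ _

theorem IsPath.pathLen_le_duration {H : State P} {es : List P.E} (h : IsPath P H es) :
    pathLen P H es ≤ duration P H :=
  le_csSup (bddAbove_pathLen H) ⟨es, h, rfl⟩

theorem duration_le {H : State P} {M : ℤ} (hne : ∃ es, IsPath P H es)
    (h : ∀ es, IsPath P H es → pathLen P H es ≤ M) : duration P H ≤ M := by
  obtain ⟨es, hes⟩ := hne
  exact csSup_le ⟨_, es, hes, rfl⟩ (by rintro L ⟨es, hes, rfl⟩; exact h es hes)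

theorem duration_eq_zero_of_forall_not_isPath {H : State P} (h : ∀ es, ¬ IsPath P H es) :
    duration P H = 0 := by
  simp [duration, h]

theorem exists_isPath_of_crashing {k : ℤ} {X : P.E → ℕ} (hX : Crashing P k X) (hk : 0 < k) :
    ∃ es, IsPath P (base P) es := by
  by_contra! h
  have h₀ := duration_eq_zero_of_forall_not_isPath h
  have h₁ := duration_eq_zero_of_forall_not_isPath (H := applyPlan P X) h
  have := hX.2
  omega

variable (P) in
def IsCriticalPath (es : List P.E) : Prop :=
  IsPath P (base P) es ∧ pathLen P (base P) es = duration P (base P)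

/-- Both exchanged paths are no longer than `d(N)`, and their lengths add up to `2 d(N)`. -/
theorem IsCriticalPath.exchange_prefix {q r q' r' : List P.E} {u : P.V}
    (h : IsCriticalPath P (q ++ r)) (h' : IsCriticalPath P (q' ++ r'))
    (hq : IsWalk P P.s q u) (hq' : IsWalk P P.s q' u) : IsCriticalPath P (q' ++ r) := by
  have hp := h.1.exchange_prefix hq hq'
  have hp' := h'.1.exchange_prefix hq' hq
  refine ⟨hp, ?_⟩
  have hle := hp.pathLen_le_duration
  have hle' := hp'.pathLen_le_duration
  have heq := h.2
  have heq' := h'.2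
  rw [pathLen_append] at hle hle' heq heq' ⊢
  omega

theorem IsCriticalPath.le_sum_map {k : ℤ} {X : P.E → ℕ} {es : List P.E}
    (h : IsCriticalPath P es) (hX : Crashing P k X) : k ≤ (es.map X).sum := by
  have := (isPath_applyPlan_iff.mpr h.1).pathLen_le_duration.trans hX.2
  rw [pathLen_applyPlan, h.2] at this
  omega

theorem crashing_one_of_forall_isCriticalPath {Y : P.E → ℕ} (hne : ∃ es, IsPath P (base P) es)
    (hY : Feasible P Y) (h : ∀ es, IsCriticalPath P es → 1 ≤ (es.map Y).sum) :
    Crashing P 1 Y := by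
  refine ⟨hY, duration_le hne fun es hes => ?_⟩
  rw [isPath_applyPlan_iff] at hes
  rw [pathLen_applyPlan]
  have hle := hes.pathLen_le_duration
  by_cases hc : pathLen P (base P) es = duration P (base P)
  · have := h es ⟨hes, hc⟩
    omega
  · omega

variable (P) in
def IsCriticalPrefix (u : P.V) (q : List P.E) : Prop :=
  IsWalk P P.s q u ∧ ∃ r, IsCriticalPath P (q ++ r)

variable (P) in
/-- `sInf ∅ = 0`: a vertex on no critical path gets distance `0`. -/
def critDist (X : P.E → ℕ) (u : P.V) : ℕ :=
  sInf {n | ∃ q, IsCriticalPrefix P u q ∧ (q.map X).sum = n}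

variable {X : P.E → ℕ}

theorem critDist_le {u : P.V} {q : List P.E} (hq : IsCriticalPrefix P u q) :
    critDist P X u ≤ (q.map X).sum :=
  Nat.sInf_le ⟨q, hq, rfl⟩

theorem critDist_source {es : List P.E} (hes : IsCriticalPath P es) : critDist P X P.s = 0 :=
  Nat.eq_zero_of_le_zero (critDist_le (q := []) ⟨rfl, es, hes⟩)

theorem critDist_dst_le {q r : List P.E} {e : P.E} {u : P.V} (hq : IsWalk P P.s q u)
    (h : IsCriticalPath P (q ++ e :: r)) : critDist P X (P.dst e) ≤ critDist P X u + X e := by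
  obtain ⟨q₀, ⟨hq₀, r₀, hcrit₀⟩, hsum₀⟩ := Nat.sInf_mem
    (⟨_, q, ⟨hq, e :: r, h⟩, rfl⟩ :
      {n | ∃ q, IsCriticalPrefix P u q ∧ (q.map X).sum = n}.Nonempty)
  have hsrc : P.src e = u := ((isPath_base_iff.mp h.1).2.of_append hq).1
  have hcrit : IsCriticalPath P ((q₀ ++ [e]) ++ r) := by
    simpa using h.exchange_prefix hcrit₀ hq hq₀
  calc critDist P X (P.dst e) ≤ ((q₀ ++ [e]).map X).sum :=
        critDist_le ⟨hq₀.concat hsrc, r, hcrit⟩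
    _ = critDist P X u + X e := by simp [critDist, hsum₀]

theorem le_critDist_sink {k : ℕ} {es : List P.E} (hX : Crashing P k X)
    (hes : IsCriticalPath P es) : k ≤ critDist P X P.t := by
  obtain ⟨q, ⟨hq, r, hcrit⟩, hsum⟩ := Nat.sInf_mem
    (⟨_, es, ⟨(isPath_base_iff.mp hes.1).2, [], by simpa using hes⟩, rfl⟩ :
      {n | ∃ q, IsCriticalPrefix P P.t q ∧ (q.map X).sum = n}.Nonempty)
  obtain rfl : r = [] := ((isPath_base_iff.mp hcrit.1).2.of_append hq).eq_nil_of_starts_at_sink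
  rw [List.append_nil] at hcrit
  have := hcrit.le_sum_map hX
  simp only [critDist]
  omega

theorem exists_crossing_of_critDist_lt {j : ℕ} (hj : j ≤ critDist P X P.t) :
    ∀ {r q : List P.E} {u : P.V}, IsWalk P P.s q u → IsCriticalPath P (q ++ r) →
      critDist P X u < j →
      ∃ e ∈ r, j ∈ Ioc (critDist P X (P.src e)) (critDist P X (P.src e) + X e) := by
  intro r
  induction r with
  | nil =>
    intro q u hq h hu
    have hut : u = P.t := (isPath_base_iff.mp h.1).2.of_append hq
    subst hut
    omega
  | cons e r ih =>
    intro q u hq h hu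
    have hsrc : P.src e = u := ((isPath_base_iff.mp h.1).2.of_append hq).1
    have hstep := critDist_dst_le (X := X) hq h
    by_cases hje : j ≤ critDist P X (P.dst e)
    · exact ⟨e, List.mem_cons_self, by rw [mem_Ioc, hsrc]; omega⟩
    · obtain ⟨f, hf, hfj⟩ := ih (hq.concat hsrc) (by simpa using h) (by omega)
      exact ⟨f, List.mem_cons_of_mem e hf, hfj⟩

variable (P) in
def levelPlan (X : P.E → ℕ) (j : ℕ) (e : P.E) : ℕ :=
  if j ∈ Ioc (critDist P X (P.src e)) (critDist P X (P.src e) + X e) then 1 else 0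

theorem sum_levelPlan_le (s : Finset ℕ) (e : P.E) : ∑ j ∈ s, levelPlan P X j e ≤ X e := by
  simp only [levelPlan, sum_boole, Nat.cast_id]
  calc #(s.filter _) ≤ #(Ioc (critDist P X (P.src e)) (critDist P X (P.src e) + X e)) :=
        card_le_card fun j hj => (mem_filter.mp hj).2
    _ = X e := by simp

theorem levelPlan_le (j : ℕ) (e : P.E) : levelPlan P X j e ≤ X e := by
  simpa using sum_levelPlan_le {j} e

theorem one_le_sum_levelPlan {k j : ℕ} {es : List P.E} (hX : Crashing P k X) (hj : 1 ≤ j)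
    (hjk : j ≤ k) (hes : IsCriticalPath P es) : 1 ≤ (es.map (levelPlan P X j)).sum := by
  obtain ⟨e, he, hje⟩ := exists_crossing_of_critDist_lt (hjk.trans (le_critDist_sink hX hes))
    (q := []) (u := P.s) rfl hes (by rw [critDist_source hes]; omega)
  calc 1 = levelPlan P X j e := by simp [levelPlan, hje]
    _ ≤ _ := List.single_le_sum (fun _ _ => Nat.zero_le _) _ (List.mem_map_of_mem he)

theorem crashing_levelPlan {k j : ℕ} (hX : Crashing P k X) (hj : 1 ≤ j) (hjk : j ≤ k) :
    Crashing P 1 (levelPlan P X j) :=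
  crashing_one_of_forall_isCriticalPath (exists_isPath_of_crashing hX (by omega))
    (fun e => (Nat.cast_le.mpr (levelPlan_le j e)).trans (hX.1 e))
    (fun _ hes => one_le_sum_levelPlan hX hj hjk hes)

theorem sum_cost_le_cost {ι : Type*} (s : Finset ι) (Y : ι → P.E → ℕ)
    (h : ∀ e, ∑ i ∈ s, Y i e ≤ X e) : ∑ i ∈ s, cost P (Y i) ≤ cost P X := by
  unfold cost
  rw [sum_comm]
  gcongr with e
  rw [← mul_sum]
  gcongr
  · exact P.cost_nonneg e
  · exact_mod_cast h e

end Project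

theorem kCrashing_cost_lower_bound_general (P : Project) (k : ℕ)
    (X : P.E → ℕ) (hX : Project.Crashing P (k : ℤ) X)
    (A : P.E → ℕ)
    (hAmin : ∀ Y, Project.Crashing P 1 Y → Project.cost P A ≤ Project.cost P Y) :
    (k : ℝ) * Project.cost P A ≤ Project.cost P X := by
  calc (k : ℝ) * P.cost A = ∑ _j ∈ Icc 1 k, P.cost A := by simp
    _ ≤ ∑ j ∈ Icc 1 k, P.cost (P.levelPlan X j) := sum_le_sum fun j hj =>
        hAmin _ (Project.crashing_levelPlan hX (mem_Icc.mp hj).1 (mem_Icc.mp hj).2)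
    _ ≤ P.cost X := Project.sum_cost_le_cost _ _ (Project.sum_levelPlan_le _)

/-- every `k`-crashing plan costs at least `k` times the minimum
cost of a `1`-crashing plan. -/
theorem kCrashing_cost_lower_bound (P : Project) (k : ℕ) (hk : 1 ≤ k)
    (hkmax : (k : ℤ) ≤ Project.kmax P)
    (X : P.E → ℕ) (hX : Project.Crashing P (k : ℤ) X)
    (A : P.E → ℕ) (hA1 : Project.Crashing P 1 A)
    (hAmin : ∀ Y, Project.Crashing P 1 Y → Project.cost P A ≤ Project.cost P Y) :
    (k : ℝ) * Project.cost P A ≤ Project.cost P X :=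
  kCrashing_cost_lower_bound_general P k X hX A hAmin
end
end

section
/- Let ω be a finite sequence, let L_1 and L_2 be disjoint increasing subsequences of ω, let A_1 be a maximum-length increasing subsequence of ω, and let A_2 be a maximum-length increasing subsequence of ω restricted to the indices outside A_1. Then 2|A_2| + |A_1| ≥ |L_1| + |L_2|. -/
open Finset

section LIS

variable {ι : Type*} [DecidableEq ι] [Fintype ι] {α : Type*} [LinearOrder α]

/-- `A` is an increasing subsequence of the sequence `ω` restricted to the index
set `I`, where `r` is the precedence relation on indices: `A ⊆ I` and the values
of `ω` on `A` strictly increase along `r`. A subsequence is identified with its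
set of indices. -/
def IncSubseqOn (r : ι → ι → Prop) (ω : ι → α) (I A : Finset ι) : Prop :=
  A ⊆ I ∧ ∀ i ∈ A, ∀ j ∈ A, r i j → ω i < ω j

/-- `A` is a maximum-length increasing subsequence of `ω` restricted to `I`. -/
def IsMaxIncOn (r : ι → ι → Prop) (ω : ι → α) (I A : Finset ι) : Prop :=
  IncSubseqOn r ω I A ∧ ∀ B : Finset ι, IncSubseqOn r ω I B → B.card ≤ A.card

/-- `A 1, …, A k` is a greedy execution: each `A x` is a maximum-length increasing
subsequence of `ω` restricted to the indices outside `A 1 ∪ … ∪ A (x-1)`. -/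
def GreedyExec (r : ι → ι → Prop) (ω : ι → α) (k : ℕ) (A : ℕ → Finset ι) : Prop :=
  ∀ x, 1 ≤ x → x ≤ k →
    IsMaxIncOn r ω (Finset.univ \ (Finset.Icc 1 (x - 1)).biUnion A) (A x)

end LIS

/-- `2|A2| + |A1| ≥ |L1| + |L2|`. -/
theorem two_A2_bound (n : ℕ) {α : Type*} [LinearOrder α] (ω : Fin n → α)
    (L1 L2 A1 A2 : Finset (Fin n))
    (hL1 : IncSubseqOn (· < ·) ω Finset.univ L1)
    (hL2 : IncSubseqOn (· < ·) ω Finset.univ L2)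
    (hdisj : Disjoint L1 L2)
    (hA1 : IsMaxIncOn (· < ·) ω Finset.univ A1)
    (hA2 : IsMaxIncOn (· < ·) ω (Finset.univ \ A1) A2) :
    2 * A2.card + A1.card ≥ L1.card + L2.card := by
  have key : ∀ L : Finset (Fin n), IncSubseqOn (· < ·) ω Finset.univ L →
      (L \ A1).card ≤ A2.card := by
    intro L hL
    refine hA2.2 _ ⟨fun i hi => ?_, fun i hi j hj hij => ?_⟩
    · simp only [Finset.mem_sdiff] at hi ⊢
      exact ⟨Finset.mem_univ _, hi.2⟩
    · exact hL.2 i (Finset.mem_sdiff.mp hi).1 j (Finset.mem_sdiff.mp hj).1 hij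
  have h1 := key L1 hL1
  have h2 := key L2 hL2
  have h3 : (L1 ∩ A1).card + (L2 ∩ A1).card ≤ A1.card := by
    rw [← Finset.card_union_of_disjoint (hdisj.mono Finset.inter_subset_left Finset.inter_subset_left)]
    exact Finset.card_le_card (by
      intro i hi
      simp only [Finset.mem_union, Finset.mem_inter] at hi
      tauto)
  have e1 := Finset.card_sdiff_add_card_inter L1 A1
  have e2 := Finset.card_sdiff_add_card_inter L2 A1
  omega
end

section
/- Let ω be a finite sequence, let L_1 and L_2 be disjoint increasing subsequences of ω, let A_1 be a maximum-length increasing subsequence of ω, and let A_2 be a maximum-length increasing subsequence of ω restricted to the indices outside A_1. Then |A_1| + |A_2| ≥ (3/4)(|L_1| + |L_2|); in particular the greedy algorithm is a 3/4-approximation for the 2-LIS problem. -/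
open Finset

/-- the greedy algorithm is a `3/4`-approximation for the 2-LIS
problem: `|A1| + |A2| ≥ (3/4)(|L1| + |L2|)`. -/
theorem greedy_two_LIS_approx (n : ℕ) {α : Type*} [LinearOrder α] (ω : Fin n → α)
    (L1 L2 A1 A2 : Finset (Fin n))
    (hL1 : IncSubseqOn (· < ·) ω Finset.univ L1)
    (hL2 : IncSubseqOn (· < ·) ω Finset.univ L2)
    (hdisj : Disjoint L1 L2)
    (hA1 : IsMaxIncOn (· < ·) ω Finset.univ A1)
    (hA2 : IsMaxIncOn (· < ·) ω (Finset.univ \ A1) A2) :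
    (A1.card : ℝ) + (A2.card : ℝ) ≥ (3 / 4) * ((L1.card : ℝ) + (L2.card : ℝ)) := by
  -- A1 is at least as long as L1 and L2
  have h1 : L1.card ≤ A1.card := hA1.2 L1 hL1
  have h2 : L2.card ≤ A1.card := hA1.2 L2 hL2
  -- L1 \ A1 and L2 \ A1 are increasing subsequences on univ \ A1
  have key : ∀ L : Finset (Fin n), IncSubseqOn (· < ·) ω Finset.univ L →
      (L \ A1).card ≤ A2.card := by
    intro L hL
    refine hA2.2 _ ⟨?_, ?_⟩
    · intro i hi
      simp only [Finset.mem_sdiff, Finset.mem_univ, true_and] at hi ⊢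
      exact hi.2
    · intro i hi j hj hij
      exact hL.2 i (Finset.sdiff_subset hi) j (Finset.sdiff_subset hj) hij
  have h3 : (L1 \ A1).card ≤ A2.card := key L1 hL1
  have h4 : (L2 \ A1).card ≤ A2.card := key L2 hL2
  have e1 : (L1 ∩ A1).card + (L1 \ A1).card = L1.card := Finset.card_inter_add_card_sdiff L1 A1
  have e2 : (L2 ∩ A1).card + (L2 \ A1).card = L2.card := Finset.card_inter_add_card_sdiff L2 A1
  have h5 : (L1 ∩ A1).card + (L2 ∩ A1).card ≤ A1.card := by
    have hd : Disjoint (L1 ∩ A1) (L2 ∩ A1) :=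
      (hdisj.mono Finset.inter_subset_left Finset.inter_subset_left)
    calc (L1 ∩ A1).card + (L2 ∩ A1).card = ((L1 ∩ A1) ∪ (L2 ∩ A1)).card :=
          (Finset.card_union_of_disjoint hd).symm
      _ ≤ A1.card := Finset.card_le_card (by
          intro i hi
          rcases Finset.mem_union.1 hi with h | h
          · exact (Finset.mem_inter.1 h).2
          · exact (Finset.mem_inter.1 h).2)
  have c1 : ((L1 \ A1).card : ℝ) ≤ A2.card := by exact_mod_cast h3
  have c2 : ((L2 \ A1).card : ℝ) ≤ A2.card := by exact_mod_cast h4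
  have c3 : ((L1 ∩ A1).card : ℝ) + (L1 \ A1).card = L1.card := by exact_mod_cast e1
  have c4 : ((L2 ∩ A1).card : ℝ) + (L2 \ A1).card = L2.card := by exact_mod_cast e2
  have c5 : ((L1 ∩ A1).card : ℝ) + (L2 ∩ A1).card ≤ A1.card := by exact_mod_cast h5
  have c6 : (L1.card : ℝ) ≤ A1.card := by exact_mod_cast h1
  have c7 : (L2.card : ℝ) ≤ A1.card := by exact_mod_cast h2
  linarith
end

section
/- Let ω be a finite sequence, k ≥ 1, let L_1, …, L_k be pairwise disjoint increasing subsequences of ω with total length |OPT|, and let A_1, …, A_k be a greedy execution with g_x = |A_1| + … + |A_x| (and g_0 = 0). Then for every x with 1 ≤ x ≤ k, k·|A_x| + g_{x−1} ≥ |OPT|. -/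
open Finset

/-- `k·|A_x| + g_{x-1} ≥ |OPT|`. -/
theorem greedy_step_bound (n : ℕ) {α : Type*} [LinearOrder α] (ω : Fin n → α)
    (k : ℕ) (hk : 1 ≤ k)
    (L : ℕ → Finset (Fin n))
    (hL : ∀ i, 1 ≤ i → i ≤ k → IncSubseqOn (· < ·) ω Finset.univ (L i))
    (hLdisj : ∀ i j, 1 ≤ i → i ≤ k → 1 ≤ j → j ≤ k → i ≠ j → Disjoint (L i) (L j))
    (A : ℕ → Finset (Fin n)) (hA : GreedyExec (· < ·) ω k A)
    (x : ℕ) (hx1 : 1 ≤ x) (hxk : x ≤ k) :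
    k * (A x).card + ∑ i ∈ Finset.Icc 1 (x - 1), (A i).card ≥
      ∑ i ∈ Finset.Icc 1 k, (L i).card := by
  set S : Finset (Fin n) := (Finset.Icc 1 (x - 1)).biUnion A with hS
  obtain ⟨hAx, hmax⟩ := hA x hx1 hxk
  -- Each L i minus S is an increasing subsequence on univ \ S
  have hstep : ∀ i, 1 ≤ i → i ≤ k → (L i \ S).card ≤ (A x).card := by
    intro i hi1 hik
    apply hmax
    constructor
    · intro a ha
      simp only [Finset.mem_sdiff] at ha ⊢
      exact ⟨Finset.mem_univ a, ha.2⟩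
    · intro a ha b hb hab
      exact (hL i hi1 hik).2 a (Finset.mem_sdiff.1 ha).1 b (Finset.mem_sdiff.1 hb).1 hab
  have split : ∀ i : ℕ, (L i).card = (L i ∩ S).card + (L i \ S).card := by
    intro i
    rw [Finset.card_inter_add_card_sdiff]
  calc ∑ i ∈ Finset.Icc 1 k, (L i).card
      = ∑ i ∈ Finset.Icc 1 k, ((L i ∩ S).card + (L i \ S).card) := by
        exact Finset.sum_congr rfl fun i _ => split i
    _ = (∑ i ∈ Finset.Icc 1 k, (L i ∩ S).card) +
        ∑ i ∈ Finset.Icc 1 k, (L i \ S).card := Finset.sum_add_distrib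
    _ ≤ (∑ i ∈ Finset.Icc 1 (x - 1), (A i).card) + k * (A x).card := by
        apply Nat.add_le_add
        · have hdisj : ∀ i ∈ Finset.Icc 1 k, ∀ j ∈ Finset.Icc 1 k, i ≠ j →
              Disjoint (L i ∩ S) (L j ∩ S) := by
            intro i hi j hj hij
            simp only [Finset.mem_Icc] at hi hj
            exact Finset.disjoint_of_subset_left Finset.inter_subset_left
              (Finset.disjoint_of_subset_right Finset.inter_subset_left
                (hLdisj i j hi.1 hi.2 hj.1 hj.2 hij))
          calc ∑ i ∈ Finset.Icc 1 k, (L i ∩ S).card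
              = ((Finset.Icc 1 k).biUnion fun i => L i ∩ S).card :=
                (Finset.card_biUnion hdisj).symm
            _ ≤ S.card := by
                apply Finset.card_le_card
                intro a ha
                obtain ⟨i, _, hia⟩ := Finset.mem_biUnion.1 ha
                exact (Finset.mem_inter.1 hia).2
            _ ≤ ∑ i ∈ Finset.Icc 1 (x - 1), (A i).card := Finset.card_biUnion_le
        · calc ∑ i ∈ Finset.Icc 1 k, (L i \ S).card
              ≤ ∑ _i ∈ Finset.Icc 1 k, (A x).card := by
                apply Finset.sum_le_sum
                intro i hi
                simp only [Finset.mem_Icc] at hi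
                exact hstep i hi.1 hi.2
            _ = k * (A x).card := by
                rw [Finset.sum_const, Nat.card_Icc]
                simp [Nat.mul_comm]
    _ = k * (A x).card + ∑ i ∈ Finset.Icc 1 (x - 1), (A i).card := Nat.add_comm _ _
end

section
/- Let ω be a finite sequence, k ≥ 1, let L_1, …, L_k be pairwise disjoint increasing subsequences of ω of maximum total length |OPT| > 0, and let A_1, …, A_k be a greedy execution with g_k = |A_1| + … + |A_k|. Then g_k / |OPT| ≥ 1 − ((k−1)/k)^k > 1 − 1/e; in particular the greedy algorithm is a (1 − 1/e)-approximation for the k-LIS problem. -/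
open Finset

/-- the greedy algorithm is a `(1 - 1/e)`-approximation for the
`k`-LIS problem: `g_k/|OPT| ≥ 1 - ((k-1)/k)^k > 1 - 1/e`. -/
theorem greedy_kLIS_approx (n : ℕ) {α : Type*} [LinearOrder α] (ω : Fin n → α)
    (k : ℕ) (hk : 1 ≤ k)
    (L : ℕ → Finset (Fin n))
    (hL : ∀ i, 1 ≤ i → i ≤ k → IncSubseqOn (· < ·) ω Finset.univ (L i))
    (hLdisj : ∀ i j, 1 ≤ i → i ≤ k → 1 ≤ j → j ≤ k → i ≠ j → Disjoint (L i) (L j))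
    (hLmax : ∀ L' : ℕ → Finset (Fin n),
      (∀ i, 1 ≤ i → i ≤ k → IncSubseqOn (· < ·) ω Finset.univ (L' i)) →
      (∀ i j, 1 ≤ i → i ≤ k → 1 ≤ j → j ≤ k → i ≠ j → Disjoint (L' i) (L' j)) →
      ∑ i ∈ Finset.Icc 1 k, (L' i).card ≤ ∑ i ∈ Finset.Icc 1 k, (L i).card)
    (hpos : 0 < ∑ i ∈ Finset.Icc 1 k, (L i).card)
    (A : ℕ → Finset (Fin n)) (hA : GreedyExec (· < ·) ω k A) :
    (∑ i ∈ Finset.Icc 1 k, ((A i).card : ℝ)) / (∑ i ∈ Finset.Icc 1 k, ((L i).card : ℝ)) ≥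
        1 - (((k : ℝ) - 1) / (k : ℝ)) ^ k ∧
      1 - (((k : ℝ) - 1) / (k : ℝ)) ^ k > 1 - 1 / Real.exp 1 := by
 classical
  set OPT : ℕ := ∑ i ∈ Finset.Icc 1 k, (L i).card with hOPT
  -- Key combinatorial step: OPT ≤ S_x + k * |A (x+1)|
  have key : ∀ x : ℕ, x < k →
      OPT ≤ (∑ i ∈ Finset.Icc 1 x, (A i).card) + k * (A (x+1)).card := by
    intro x hx
    set B : Finset (Fin n) := (Finset.Icc 1 x).biUnion A with hB
    have hAx := hA (x+1) (by omega) (by omega)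
    simp only [Nat.add_sub_cancel] at hAx
    have h1 : ∀ i ∈ Finset.Icc 1 k, (L i \ B).card ≤ (A (x+1)).card := by
      intro i hi
      apply hAx.2
      constructor
      · intro j hj
        simp only [Finset.mem_sdiff] at hj ⊢
        exact ⟨Finset.mem_univ j, hj.2⟩
      · intro a ha b hb hab
        simp only [Finset.mem_Icc] at hi
        exact (hL i hi.1 hi.2).2 a (Finset.mem_sdiff.mp ha).1 b (Finset.mem_sdiff.mp hb).1 hab
    have h2 : ∑ i ∈ Finset.Icc 1 k, (L i ∩ B).card ≤ B.card := by
      rw [← Finset.card_biUnion]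
      · apply Finset.card_le_card
        intro j hj
        simp only [Finset.mem_biUnion, Finset.mem_inter] at hj
        obtain ⟨i, _, _, h⟩ := hj
        exact h
      · intro a ha b hb hab
        simp only [Finset.mem_Icc, Finset.mem_coe] at ha hb
        exact Finset.disjoint_of_subset_left Finset.inter_subset_left
          (Finset.disjoint_of_subset_right Finset.inter_subset_left
            (hLdisj a b ha.1 ha.2 hb.1 hb.2 hab))
    have h3 : B.card ≤ ∑ i ∈ Finset.Icc 1 x, (A i).card := Finset.card_biUnion_le
    have h4 : OPT = (∑ i ∈ Finset.Icc 1 k, (L i \ B).card)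
        + ∑ i ∈ Finset.Icc 1 k, (L i ∩ B).card := by
      rw [hOPT, ← Finset.sum_add_distrib]
      refine Finset.sum_congr rfl fun i _ => ?_
      rw [← Finset.card_inter_add_card_sdiff (L i) B]
      omega
    have h5 : ∑ i ∈ Finset.Icc 1 k, (L i \ B).card ≤ k * (A (x+1)).card := by
      calc ∑ i ∈ Finset.Icc 1 k, (L i \ B).card
          ≤ ∑ _i ∈ Finset.Icc 1 k, (A (x+1)).card := Finset.sum_le_sum h1
        _ = k * (A (x+1)).card := by
            rw [Finset.sum_const, Nat.card_Icc, smul_eq_mul, Nat.add_sub_cancel]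
    omega
  have hk0 : (0:ℝ) < (k:ℝ) := by exact_mod_cast hk
  set ρ : ℝ := ((k:ℝ) - 1) / (k:ℝ) with hρ
  have hk1 : (1:ℝ) ≤ (k:ℝ) := by exact_mod_cast hk
  have hρ0 : 0 ≤ ρ := div_nonneg (by linarith) (by linarith)
  have main : ∀ x, x ≤ k →
      (OPT:ℝ) - ∑ i ∈ Finset.Icc 1 x, ((A i).card : ℝ) ≤ (OPT:ℝ) * ρ ^ x := by
    intro x
    induction x with
    | zero => simp
    | succ m ih =>
      intro hm
      have ihm := ih (by omega)
      have hkey := key m (by omega)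
      have hkeyR : (OPT:ℝ) ≤ (∑ i ∈ Finset.Icc 1 m, ((A i).card:ℝ))
          + (k:ℝ) * ((A (m+1)).card:ℝ) := by exact_mod_cast hkey
      have hsum : ∑ i ∈ Finset.Icc 1 (m+1), ((A i).card:ℝ)
          = (∑ i ∈ Finset.Icc 1 m, ((A i).card:ℝ)) + ((A (m+1)).card:ℝ) :=
        Finset.sum_Icc_succ_top (by omega) _
      rw [hsum]
      have step : (OPT:ℝ) - ((∑ i ∈ Finset.Icc 1 m, ((A i).card:ℝ)) + ((A (m+1)).card:ℝ))
          ≤ ((OPT:ℝ) - ∑ i ∈ Finset.Icc 1 m, ((A i).card:ℝ)) * ρ := by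
        rw [hρ, mul_div_assoc', le_div_iff₀ hk0]
        nlinarith [hkeyR]
      calc _ ≤ ((OPT:ℝ) - ∑ i ∈ Finset.Icc 1 m, ((A i).card:ℝ)) * ρ := step
        _ ≤ ((OPT:ℝ) * ρ ^ m) * ρ := mul_le_mul_of_nonneg_right ihm hρ0
        _ = (OPT:ℝ) * ρ ^ (m+1) := by ring
  have hOPTpos : (0:ℝ) < (OPT:ℝ) := by exact_mod_cast hpos
  have hLcast : ∑ i ∈ Finset.Icc 1 k, ((L i).card : ℝ) = (OPT:ℝ) := by
    rw [hOPT]; push_cast; ring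
  constructor
  · have hmain := main k le_rfl
    rw [hLcast, ge_iff_le, le_div_iff₀ hOPTpos]
    nlinarith [hmain]
  · have hkne : k ≠ 0 := by omega
    have h1 : ρ < Real.exp (-(1/(k:ℝ))) := by
      have := Real.add_one_lt_exp (x := -(1/(k:ℝ))) (neg_ne_zero.mpr (by positivity))
      have hρeq : ρ = -(1/(k:ℝ)) + 1 := by rw [hρ]; field_simp; ring
      rw [hρeq]
      exact this
    have h2 : ρ ^ k < (Real.exp (-(1/(k:ℝ)))) ^ k := pow_lt_pow_left₀ h1 hρ0 hkne
    have h3 : (Real.exp (-(1/(k:ℝ)))) ^ k = Real.exp (-1) := by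
      rw [← Real.exp_nat_mul]
      congr 1
      field_simp
    have : ρ ^ k < 1 / Real.exp 1 := by
      rw [one_div, ← Real.exp_neg 1, ← h3]; exact h2
    linarith
end

section
/- For every k ≥ 2, consider the sequence ω of length k² defined by the k×k matrix M with M_{i,j} = i (rows indexed 1..k from bottom to top): ω is indexed by pairs (i,j) ∈ {1,…,k}² with value i, ordered so that (i,j) precedes (i',j') iff i+j < i'+j', or i+j = i'+j' and i > i'. Then: (1) ω can be partitioned into k pairwise disjoint increasing subsequences each of length k, so the optimum of the k-LIS problem on ω equals k²; and (2) there exists a greedy execution A_1, …, A_k on ω (namely returning the k longest diagonals D_0, D_1, D_{−1}, D_2, D_{−2}, …, where D_x is the subsequence of positions {(i,j) : j = i + x}) whose total length equals ⌈(3/4)k²⌉. Consequently the greedy algorithm may achieve exactly the ratio ⌈(3/4)k²⌉ / k². -/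
open Finset

lemma key_bound (k a b : ℕ) (hab : b ≤ a)
    (r : Fin k × Fin k → Fin k × Fin k → Prop)
    (hr : ∀ p q : Fin k × Fin k, r p q ↔
      ((p.1 : ℕ) + (p.2 : ℕ) < (q.1 : ℕ) + (q.2 : ℕ) ∨
        ((p.1 : ℕ) + (p.2 : ℕ) = (q.1 : ℕ) + (q.2 : ℕ) ∧ (q.1 : ℕ) < (p.1 : ℕ))))
    (ω : Fin k × Fin k → ℕ) (hω : ∀ p, ω p = (p.1 : ℕ) + 1)
    (B : Finset (Fin k × Fin k))
    (hreg : ∀ p ∈ B, (p.1 : ℕ) + a ≤ (p.2 : ℕ) ∨ (p.2 : ℕ) + b ≤ (p.1 : ℕ))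
    (hinc : ∀ p ∈ B, ∀ q ∈ B, r p q → ω p < ω q) :
    B.card ≤ k - b := by
  classical
  set f : Fin k × Fin k → ℕ :=
    fun p => (p.1 : ℕ) + (if (p.1 : ℕ) + a ≤ (p.2 : ℕ) then b else 0) with hf
  have hlt : ∀ p ∈ B, ∀ q ∈ B, r p q → f p < f q := by
    intro p hp q hq hpq
    have h1 : ω p < ω q := hinc p hp q hq hpq
    rw [hω, hω] at h1
    have h2 := (hr p q).mp hpq
    have hp' := hreg p hp
    have hq' := hreg q hq
    simp only [hf]
    split_ifs <;> omega
  have hinj : Set.InjOn f B := by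
    intro p hp q hq hfe
    by_contra hne
    have htot : r p q ∨ r q p := by
      rw [hr, hr]
      by_contra hcon
      apply hne
      have h1 : (p.1 : ℕ) = (q.1 : ℕ) ∧ (p.2 : ℕ) = (q.2 : ℕ) := by omega
      exact Prod.ext (Fin.ext h1.1) (Fin.ext h1.2)
    rcases htot with h | h
    · exact absurd hfe (Nat.ne_of_lt (hlt p hp q hq h))
    · exact absurd hfe.symm (Nat.ne_of_lt (hlt q hq p hp h))
  calc B.card = (B.image f).card := (Finset.card_image_of_injOn hinj).symm
    _ ≤ (Finset.Ico b k).card := by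
        apply Finset.card_le_card
        intro n hn
        simp only [Finset.mem_image] at hn
        obtain ⟨p, hp, rfl⟩ := hn
        have h0 := hreg p hp
        have h1 : (p.1 : ℕ) < k := p.1.isLt
        have h2 : (p.2 : ℕ) < k := p.2.isLt
        simp only [hf, Finset.mem_Ico]
        split_ifs <;> omega
    _ = k - b := Nat.card_Ico b k


def offd (i : ℕ) : ℤ := if i % 2 = 0 then ((i / 2 : ℕ) : ℤ) else -((i / 2 : ℕ) : ℤ)

lemma offd_inj {i j : ℕ} (hi : 1 ≤ i) (hj : 1 ≤ j) (h : offd i = offd j) : i = j := by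
  unfold offd at h
  split_ifs at h <;> omega

lemma offd_natAbs (i : ℕ) : (offd i).natAbs = i / 2 := by
  unfold offd; split_ifs <;> omega

lemma offd_exists {x : ℕ} {o : ℤ} (h1 : -((x/2 : ℕ) : ℤ) < o)
    (h2 : o < ((x/2 + x % 2 : ℕ) : ℤ)) :
    ∃ i, 1 ≤ i ∧ i ≤ x - 1 ∧ offd i = o := by
  rcases lt_trichotomy o 0 with ho | ho | ho
  · refine ⟨2 * o.natAbs + 1, by omega, by omega, ?_⟩
    unfold offd
    rw [if_neg (by omega)]
    omega
  · exact ⟨1, le_refl 1, by omega, by subst ho; unfold offd; norm_num⟩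
  · refine ⟨2 * o.natAbs, by omega, by omega, ?_⟩
    unfold offd
    rw [if_pos (by omega)]
    omega

lemma D_card {k : ℕ} (o : ℤ) :
    (Finset.univ.filter (fun p : Fin k × Fin k => ((p.2 : ℕ) : ℤ) = ((p.1 : ℕ) : ℤ) + o)).card
      = k - o.natAbs := by
  classical
  set S := Finset.univ.filter (fun p : Fin k × Fin k => ((p.2 : ℕ) : ℤ) = ((p.1 : ℕ) : ℤ) + o) with hS
  have hinj : Set.InjOn (fun p : Fin k × Fin k => (p.1 : ℕ)) S := by
    intro p hp q hq hfe
    simp only [hS, Finset.mem_coe, Finset.mem_filter] at hp hq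
    have hfe' : (p.1 : ℕ) = (q.1 : ℕ) := hfe
    have : (p.2 : ℕ) = (q.2 : ℕ) := by omega
    exact Prod.ext (Fin.ext hfe') (Fin.ext this)
  have himg : S.image (fun p : Fin k × Fin k => (p.1 : ℕ)) =
      (Finset.range k).filter (fun i : ℕ => 0 ≤ (i : ℤ) + o ∧ (i : ℤ) + o < (k : ℤ)) := by
    ext i
    simp only [Finset.mem_image, Finset.mem_filter, Finset.mem_range, hS]
    constructor
    · rintro ⟨p, hp, rfl⟩
      simp only [Finset.mem_filter, Finset.mem_univ, true_and] at hp
      have h1 : (p.1 : ℕ) < k := p.1.isLt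
      have h2 : (p.2 : ℕ) < k := p.2.isLt
      have h3 : 0 ≤ ((p.2 : ℕ) : ℤ) := Int.natCast_nonneg _
      exact ⟨h1, by omega, by omega⟩
    · rintro ⟨h1, h2, h3⟩
      refine ⟨(⟨i, h1⟩, ⟨((i : ℤ) + o).toNat, by omega⟩), ?_, rfl⟩
      simp only [Finset.mem_filter, Finset.mem_univ, true_and]
      omega
  have hcard : S.card = ((Finset.range k).filter
      (fun i : ℕ => 0 ≤ (i : ℤ) + o ∧ (i : ℤ) + o < (k : ℤ))).card := by
    rw [← himg, Finset.card_image_of_injOn hinj]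
  rw [hcard]
  rcases le_or_gt 0 o with ho | ho
  · have : (Finset.range k).filter (fun i : ℕ => 0 ≤ (i : ℤ) + o ∧ (i : ℤ) + o < (k : ℤ))
        = Finset.range (((k : ℤ) - o).toNat) := by
      ext i
      simp only [Finset.mem_filter, Finset.mem_range]
      omega
    rw [this, Finset.card_range]
    omega
  · have : (Finset.range k).filter (fun i : ℕ => 0 ≤ (i : ℤ) + o ∧ (i : ℤ) + o < (k : ℤ))
        = Finset.Ico (-o).toNat k := by
      ext i
      simp only [Finset.mem_filter, Finset.mem_range, Finset.mem_Ico]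
      omega
    rw [this, Nat.card_Ico]
    omega

lemma sum_formula (k : ℕ) : ∑ i ∈ Finset.Icc 1 k, (k - i / 2) = (3 * k ^ 2 + 3) / 4 := by
  induction k with
  | zero => simp
  | succ n ih =>
    rw [Finset.sum_Icc_succ_top (by omega)]
    have h1 : ∑ i ∈ Finset.Icc 1 n, (n + 1 - i / 2) = ∑ i ∈ Finset.Icc 1 n, ((n - i / 2) + 1) := by
      apply Finset.sum_congr rfl
      intro i hi
      simp only [Finset.mem_Icc] at hi
      omega
    rw [h1, Finset.sum_add_distrib, ih, Finset.sum_const, Nat.card_Icc, smul_eq_mul]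
    rw [pow_two, pow_two]
    rcases Nat.even_or_odd n with ⟨c, hc⟩ | ⟨c, hc⟩
    · have h2 : n * n = 4 * (c * c) := by subst hc; ring
      have h3 : (n + 1) * (n + 1) = 4 * (c * c) + 2 * n + 1 := by subst hc; ring
      rw [h2, h3]
      generalize c * c = M
      omega
    · have h2 : n * n = 4 * (c * c + c) + 1 := by subst hc; ring
      have h3 : (n + 1) * (n + 1) = 4 * (c * c + c) + 2 * n + 2 := by subst hc; ring
      rw [h2, h3]
      generalize c * c + c = M
      omega


section Parts

variable {k : ℕ}
  (r : Fin k × Fin k → Fin k × Fin k → Prop)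
  (hr : ∀ p q : Fin k × Fin k, r p q ↔
    ((p.1 : ℕ) + (p.2 : ℕ) < (q.1 : ℕ) + (q.2 : ℕ) ∨
      ((p.1 : ℕ) + (p.2 : ℕ) = (q.1 : ℕ) + (q.2 : ℕ) ∧ (q.1 : ℕ) < (p.1 : ℕ))))
  (ω : Fin k × Fin k → ℕ) (hω : ∀ p, ω p = (p.1 : ℕ) + 1)
  (D : ℤ → Finset (Fin k × Fin k))
  (hD : ∀ x : ℤ, D x = Finset.univ.filter (fun p => ((p.2 : ℕ) : ℤ) = ((p.1 : ℕ) : ℤ) + x))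
  (A : ℕ → Finset (Fin k × Fin k))
  (hA : ∀ i : ℕ, A i = if Even i then D ((i / 2 : ℕ) : ℤ) else D (-((i / 2 : ℕ) : ℤ)))

include hD in
lemma D_mem {o : ℤ} {p : Fin k × Fin k} :
    p ∈ D o ↔ ((p.2 : ℕ) : ℤ) = ((p.1 : ℕ) : ℤ) + o := by
  rw [hD]; simp

include hA hD in
lemma A_eq (i : ℕ) : A i = D (offd i) := by
  rw [hA]
  unfold offd
  by_cases h : Even i
  · rw [if_pos h, if_pos (Nat.even_iff.mp h)]
  · rw [if_neg h, if_neg (fun hc => h (Nat.even_iff.mpr hc))]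

include hA hD in
lemma A_card (i : ℕ) : (A i).card = k - i / 2 := by
  rw [A_eq D hD A hA, hD, D_card, offd_natAbs]

include hr hω hD hA in
lemma greedy_step (x : ℕ) (hx1 : 1 ≤ x) :
    IsMaxIncOn r ω (Finset.univ \ (Finset.Icc 1 (x - 1)).biUnion A) (A x) := by
  classical
  set U := (Finset.Icc 1 (x - 1)).biUnion A with hU
  set a := x / 2 + x % 2 with ha
  set b := x / 2 with hb
  have hreg : ∀ p : Fin k × Fin k, p ∈ Finset.univ \ U →
      (p.1 : ℕ) + a ≤ (p.2 : ℕ) ∨ (p.2 : ℕ) + b ≤ (p.1 : ℕ) := by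
    intro p hp
    rw [Finset.mem_sdiff] at hp
    by_contra hcon
    push_neg at hcon
    have h1 : -((x / 2 : ℕ) : ℤ) < ((p.2 : ℕ) : ℤ) - ((p.1 : ℕ) : ℤ) := by omega
    have h2 : ((p.2 : ℕ) : ℤ) - ((p.1 : ℕ) : ℤ) < ((x / 2 + x % 2 : ℕ) : ℤ) := by omega
    obtain ⟨i, hi1, hi2, hi3⟩ := offd_exists h1 h2
    have hpmem : p ∈ A i := by
      rw [A_eq D hD A hA, hi3, D_mem D hD]
      omega
    exact hp.2 (Finset.mem_biUnion.mpr ⟨i, Finset.mem_Icc.mpr ⟨hi1, hi2⟩, hpmem⟩)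
  have hsub : A x ⊆ Finset.univ \ U := by
    intro p hp
    rw [Finset.mem_sdiff]
    refine ⟨Finset.mem_univ p, ?_⟩
    rw [hU, Finset.mem_biUnion]
    rintro ⟨i, hi, hpi⟩
    rw [Finset.mem_Icc] at hi
    rw [A_eq D hD A hA, D_mem D hD] at hp hpi
    have h1 : offd i = offd x := by omega
    have h2 : i = x := offd_inj hi.1 hx1 h1
    omega
  have hinc : ∀ p ∈ A x, ∀ q ∈ A x, r p q → ω p < ω q := by
    intro p hp q hq hpq
    rw [A_eq D hD A hA, D_mem D hD] at hp hq
    have h2 := (hr p q).mp hpq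
    rw [hω, hω]
    omega
  refine ⟨⟨hsub, hinc⟩, ?_⟩
  intro B hB
  obtain ⟨hBsub, hBinc⟩ := hB
  have hbd := key_bound k a b (by omega) r hr ω hω B
    (fun p hp => hreg p (hBsub hp)) hBinc
  have hcard : (A x).card = k - b := A_card D hD A hA x
  omega

end Parts


/-- on the `k×k` diagonal example, the optimum of the `k`-LIS
problem equals `k²` (the sequence partitions into `k` disjoint increasing
subsequences each of length `k`), while the diagonal sequence
`A_1 = D_0, A_{2i} = D_i, A_{2i+1} = D_{-i}` is a greedy execution of total
length `⌈(3/4)k²⌉`. -/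
theorem greedy_tight_example (k : ℕ) (hk : 2 ≤ k)
    (r : Fin k × Fin k → Fin k × Fin k → Prop)
    (hr : ∀ p q : Fin k × Fin k, r p q ↔
      ((p.1 : ℕ) + (p.2 : ℕ) < (q.1 : ℕ) + (q.2 : ℕ) ∨
        ((p.1 : ℕ) + (p.2 : ℕ) = (q.1 : ℕ) + (q.2 : ℕ) ∧ (q.1 : ℕ) < (p.1 : ℕ))))
    (ω : Fin k × Fin k → ℕ) (hω : ∀ p, ω p = (p.1 : ℕ) + 1)
    (D : ℤ → Finset (Fin k × Fin k))
    (hD : ∀ x : ℤ, D x = Finset.univ.filter (fun p => ((p.2 : ℕ) : ℤ) = ((p.1 : ℕ) : ℤ) + x))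
    (A : ℕ → Finset (Fin k × Fin k))
    (hA : ∀ i : ℕ, A i = if Even i then D ((i / 2 : ℕ) : ℤ) else D (-((i / 2 : ℕ) : ℤ))) :
    (∃ L : ℕ → Finset (Fin k × Fin k),
        (∀ i, 1 ≤ i → i ≤ k → IncSubseqOn r ω Finset.univ (L i)) ∧
        (∀ i j, 1 ≤ i → i ≤ k → 1 ≤ j → j ≤ k → i ≠ j → Disjoint (L i) (L j)) ∧
        (∀ i, 1 ≤ i → i ≤ k → (L i).card = k) ∧
        (Finset.Icc 1 k).biUnion L = Finset.univ) ∧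
      (∀ L' : ℕ → Finset (Fin k × Fin k),
        (∀ i, 1 ≤ i → i ≤ k → IncSubseqOn r ω Finset.univ (L' i)) →
        (∀ i j, 1 ≤ i → i ≤ k → 1 ≤ j → j ≤ k → i ≠ j → Disjoint (L' i) (L' j)) →
        ∑ i ∈ Finset.Icc 1 k, (L' i).card ≤ k ^ 2) ∧
      GreedyExec r ω k A ∧
      ∑ i ∈ Finset.Icc 1 k, (A i).card = (3 * k ^ 2 + 3) / 4 := by
  classical
  refine ⟨?_, ?_, ?_, ?_⟩
  · -- Part 1: partition into k columns
    refine ⟨fun j => Finset.univ.filter (fun p : Fin k × Fin k => (p.2 : ℕ) + 1 = j),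
      ?_, ?_, ?_, ?_⟩
    · intro i _ _
      refine ⟨Finset.subset_univ _, ?_⟩
      intro p hp q hq hpq
      rw [Finset.mem_filter] at hp hq
      have h2 := (hr p q).mp hpq
      rw [hω, hω]
      omega
    · intro i j _ _ _ _ hij
      rw [Finset.disjoint_left]
      intro p hp hq
      rw [Finset.mem_filter] at hp hq
      omega
    · intro i hi1 hik
      show (Finset.univ.filter (fun p : Fin k × Fin k => (p.2 : ℕ) + 1 = i)).card = k
      have hset : Finset.univ.filter (fun p : Fin k × Fin k => (p.2 : ℕ) + 1 = i)
          = Finset.univ ×ˢ {(⟨i - 1, by omega⟩ : Fin k)} := by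
        ext p
        simp only [Finset.mem_filter, Finset.mem_univ, true_and, Finset.mem_product,
          Finset.mem_singleton, Fin.ext_iff]
        omega
      rw [hset, Finset.card_product, Finset.card_singleton, Finset.card_univ,
        Fintype.card_fin, mul_one]
    · ext p
      simp only [Finset.mem_biUnion, Finset.mem_Icc, Finset.mem_filter, Finset.mem_univ,
        true_and, iff_true]
      exact ⟨(p.2 : ℕ) + 1, ⟨by omega, by have := p.2.isLt; omega⟩, rfl⟩
  · -- Part 2: optimum at most k²
    intro L' h1 h2
    have hd : ∀ i ∈ Finset.Icc 1 k, ∀ j ∈ Finset.Icc 1 k, i ≠ j → Disjoint (L' i) (L' j) := by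
      intro i hi j hj hij
      rw [Finset.mem_Icc] at hi hj
      exact h2 i j hi.1 hi.2 hj.1 hj.2 hij
    rw [← Finset.card_biUnion hd]
    refine le_trans (Finset.card_le_univ _) (le_of_eq ?_)
    simp [Finset.card_univ, pow_two]
  · -- Part 3: greedy execution
    intro x hx1 _
    exact greedy_step r hr ω hω D hD A hA x hx1
  · -- Part 4: total length of greedy
    rw [Finset.sum_congr rfl (fun i _ => A_card D hD A hA i)]
    exact sum_formula k
end

section
/- For k ≥ 2, let ω be the sequence of length k² indexed by pairs (i,j) ∈ {1,…,k}² with value i, ordered so that (i,j) precedes (i',j') iff i+j < i'+j', or i+j = i'+j' and i > i'; let D_x denote the diagonal subsequence on positions {(i,j) : j = i + x}. Then for every j with 1 ≤ j ≤ k−1, every increasing subsequence of ω restricted to the positions outside D_0 ∪ D_1 ∪ D_{−1} ∪ … ∪ D_{j−1} ∪ D_{−(j−1)} has length at most k − j. -/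
open Finset

/-- after removing the diagonals `D_0, D_{±1}, …, D_{±(j-1)}`,
every increasing subsequence of the `k×k` diagonal example has length at most
`k - j`. -/
theorem diag_remainder_bound (k : ℕ) (hk : 2 ≤ k)
    (r : Fin k × Fin k → Fin k × Fin k → Prop)
    (hr : ∀ p q : Fin k × Fin k, r p q ↔
      ((p.1 : ℕ) + (p.2 : ℕ) < (q.1 : ℕ) + (q.2 : ℕ) ∨
        ((p.1 : ℕ) + (p.2 : ℕ) = (q.1 : ℕ) + (q.2 : ℕ) ∧ (q.1 : ℕ) < (p.1 : ℕ))))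
    (ω : Fin k × Fin k → ℕ) (hω : ∀ p, ω p = (p.1 : ℕ) + 1)
    (D : ℤ → Finset (Fin k × Fin k))
    (hD : ∀ x : ℤ, D x = Finset.univ.filter (fun p => ((p.2 : ℕ) : ℤ) = ((p.1 : ℕ) : ℤ) + x))
    (j : ℕ) (hj1 : 1 ≤ j) (hjk : j ≤ k - 1)
    (B : Finset (Fin k × Fin k))
    (hB : IncSubseqOn r ω
      (Finset.univ \ (Finset.Icc (1 - (j : ℤ)) ((j : ℤ) - 1)).biUnion D) B) :
    B.card ≤ k - j := by
  obtain ⟨hBsub, hinc⟩ := hB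
  -- every element of B is far from the main diagonal
  have hmem : ∀ p ∈ B, (p.1 : ℕ) + j ≤ (p.2 : ℕ) ∨ (p.2 : ℕ) + j ≤ (p.1 : ℕ) := by
    intro p hp
    have h := hBsub hp
    rw [Finset.mem_sdiff, Finset.mem_biUnion] at h
    have h2 := h.2
    push_neg at h2
    have h3 := h2 ((p.2 : ℕ) - (p.1 : ℕ) : ℤ)
    by_contra hc
    push_neg at hc
    have hx : (((p.2 : ℕ) : ℤ) - ((p.1 : ℕ) : ℤ)) ∈ Finset.Icc (1 - (j : ℤ)) ((j : ℤ) - 1) := by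
      rw [Finset.mem_Icc]
      omega
    have h4 := h3 hx
    rw [hD] at h4
    simp only [Finset.mem_filter, Finset.mem_univ, true_and] at h4
    omega
  -- rows increase iff sums increase within B
  have hlt : ∀ p ∈ B, ∀ q ∈ B, (p.1 : ℕ) < (q.1 : ℕ) →
      (p.1 : ℕ) + (p.2 : ℕ) < (q.1 : ℕ) + (q.2 : ℕ) := by
    intro p hp q hq hpq
    by_contra hc
    push_neg at hc
    rcases lt_or_eq_of_le hc with h | h
    · have hrqp : r q p := by rw [hr]; exact Or.inl h
      have := hinc q hq p hp hrqp
      rw [hω, hω] at this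
      omega
    · have hrqp : r q p := by rw [hr]; exact Or.inr ⟨h, hpq⟩
      have := hinc q hq p hp hrqp
      rw [hω, hω] at this
      omega
  -- equal rows in B force equal elements
  have hrow : ∀ p ∈ B, ∀ q ∈ B, (p.1 : ℕ) = (q.1 : ℕ) → p = q := by
    intro p hp q hq hpq
    by_contra hne
    have hcol : (p.2 : ℕ) ≠ (q.2 : ℕ) := by
      intro hc
      exact hne (Prod.ext (Fin.ext hpq) (Fin.ext hc))
    rcases lt_or_gt_of_ne hcol with h | h
    · have hrpq : r p q := by rw [hr]; exact Or.inl (by omega)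
      have := hinc p hp q hq hrpq
      rw [hω, hω] at this
      omega
    · have hrqp : r q p := by rw [hr]; exact Or.inl (by omega)
      have := hinc q hq p hp hrqp
      rw [hω, hω] at this
      omega
  -- the injection
  set f : Fin k × Fin k → ℕ :=
    fun p => if (p.1 : ℕ) + j ≤ (p.2 : ℕ) then (p.1 : ℕ) + j else (p.1 : ℕ) with hf
  have hmaps : ∀ p ∈ B, f p ∈ Finset.Icc j (k - 1) := by
    intro p hp
    have h1 := p.1.isLt
    have h2 := p.2.isLt
    rcases hmem p hp with h | h
    · rw [hf]
      simp only [if_pos h, Finset.mem_Icc]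
      omega
    · have hnot : ¬ ((p.1 : ℕ) + j ≤ (p.2 : ℕ)) := by omega
      rw [hf]
      simp only [if_neg hnot, Finset.mem_Icc]
      omega
  have hinj : Set.InjOn f B := by
    intro p hp q hq hfe
    rcases hmem p hp with hpA | hpB <;> rcases hmem q hq with hqA | hqB
    · -- both above
      rw [hf] at hfe
      simp only [if_pos hpA, if_pos hqA] at hfe
      exact hrow p hp q hq (by omega)
    · -- p above, q below
      have hqnot : ¬ ((q.1 : ℕ) + j ≤ (q.2 : ℕ)) := by omega
      rw [hf] at hfe
      simp only [if_pos hpA, if_neg hqnot] at hfe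
      have hplt : (p.1 : ℕ) < (q.1 : ℕ) := by omega
      have := hlt p hp q hq hplt
      omega
    · -- p below, q above
      have hpnot : ¬ ((p.1 : ℕ) + j ≤ (p.2 : ℕ)) := by omega
      rw [hf] at hfe
      simp only [if_neg hpnot, if_pos hqA] at hfe
      have hqlt : (q.1 : ℕ) < (p.1 : ℕ) := by omega
      have := hlt q hq p hp hqlt
      omega
    · -- both below
      have hpnot : ¬ ((p.1 : ℕ) + j ≤ (p.2 : ℕ)) := by omega
      have hqnot : ¬ ((q.1 : ℕ) + j ≤ (q.2 : ℕ)) := by omega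
      rw [hf] at hfe
      simp only [if_neg hpnot, if_neg hqnot] at hfe
      exact hrow p hp q hq hfe
  calc B.card ≤ (Finset.Icc j (k - 1)).card :=
        Finset.card_le_card_of_injOn f hmaps hinj
    _ = k - j := by rw [Nat.card_Icc]; omega
end
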